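/- arXiv:1907.05966 — 3 statements merged into one kernel-verified Lean document; each statement's English description precedes it below -/
import Mathlib

section
/- Let G be a finite simple graph, let D be a minimum dominating set in G, and let F be a maximal independent set within the induced subgraph G[D]. Let (d₁, …, dₙ) be any ordering of D ∖ F, and let (V₁, …, Vₙ) be the standard partition of V(G) ∖ (D ∪ N(F)) subject to this ordering. Then (V₁, …, Vₙ) has a partial ISR of size at least n/2 (i.e., a partial ISR R with 2|R| ≥ n). -/
/-- `D` is a dominating set of `G`: every vertex lies in `D` or has a neighbor in `D`. -/
def IsDomSet {V : Type*} (G : SimpleGraph V) (D : Set V) : Prop :=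
  ∀ v : V, v ∈ D ∨ ∃ u ∈ D, G.Adj u v

/-- `S` is an independent set of `G`. -/
def IsIndep {V : Type*} (G : SimpleGraph V) (S : Set V) : Prop :=
  S.Pairwise fun u v => ¬ G.Adj u v

/-- The domination number of `G`: the minimum size of a dominating set. -/
noncomputable def gamma {V : Type*} (G : SimpleGraph V) : ℕ :=
  sInf {n | ∃ D : Set V, IsDomSet G D ∧ D.ncard = n}

/-- The independence number of `G`: the maximum size of an independent set. -/
noncomputable def alpha {V : Type*} (G : SimpleGraph V) : ℕ :=
  sSup {n | ∃ S : Set V, IsIndep G S ∧ S.ncard = n}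

/-- The inverse domination number of `G`: the minimum size of a dominating set
disjoint from some minimum dominating set. -/
noncomputable def invGamma {V : Type*} (G : SimpleGraph V) : ℕ :=
  sInf {n | ∃ D T : Set V, IsDomSet G D ∧ D.ncard = gamma G ∧
    IsDomSet G T ∧ D ∩ T = ∅ ∧ T.ncard = n}

/-- The independence number of the subgraph of `G` induced by `D`. -/
noncomputable def alphaOn {V : Type*} (G : SimpleGraph V) (D : Set V) : ℕ :=
  sSup {n | ∃ S : Set V, S ⊆ D ∧ IsIndep G S ∧ S.ncard = n}

/-- The number of edges of the subgraph of `G` induced by `D`. -/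
noncomputable def edgeCountOn {V : Type*} (G : SimpleGraph V) (D : Set V) : ℕ :=
  {e ∈ G.edgeSet | ∀ v ∈ e, v ∈ D}.ncard

/-- `D` is an optimal dominating set: of minimum size; among those, `G[D]` has
maximum independence number; and subject to that, `G[D]` has fewest edges. -/
def IsOptimalDomSet {V : Type*} (G : SimpleGraph V) (D : Set V) : Prop :=
  IsDomSet G D ∧ D.ncard = gamma G ∧
  (∀ D' : Set V, IsDomSet G D' → D'.ncard = gamma G → alphaOn G D' ≤ alphaOn G D) ∧
  (∀ D' : Set V, IsDomSet G D' → D'.ncard = gamma G →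
    alphaOn G D' = alphaOn G D → edgeCountOn G D ≤ edgeCountOn G D')

/-- `w` is a private neighbor of `v` with respect to `D`: `w ∉ D` and `N(w) ∩ D = {v}`. -/
def IsPrivateNbr {V : Type*} (G : SimpleGraph V) (D : Set V) (v w : V) : Prop :=
  w ∉ D ∧ G.Adj v w ∧ ∀ u ∈ D, G.Adj u w → u = v

/-- `R` is a partial independent set of representatives (partial ISR) for the family `P`:
an independent set consisting of distinct representatives of some subfamily of `P`. -/
def IsPartialISR {V : Type*} (G : SimpleGraph V) {n : ℕ} (P : Fin n → Set V)
    (R : Set V) : Prop :=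
  IsIndep G R ∧ ∃ (J : Set (Fin n)) (x : Fin n → V),
    Set.InjOn x J ∧ (∀ j ∈ J, x j ∈ P j) ∧ R = x '' J

/-- `b(G)`: the largest number of vertices of an induced bipartite subgraph of `G`. -/
noncomputable def bipNum {V : Type*} (G : SimpleGraph V) : ℕ :=
  sSup {n | ∃ B A : Set V, A ⊆ B ∧ IsIndep G A ∧ IsIndep G (B \ A) ∧ B.ncard = n}

/-!
Take a partial ISR `R = {x_j : j ∈ J}` of maximum size. By maximality `R` dominates every
unused part `V_j`, `j ∉ J`, so replacing the `n - |J|` vertices `d_j`, `j ∉ J`, of `D` by the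
`|J|` vertices of `R` yields again a dominating set: a vertex that loses all its dominators lies
in `V(G) ∖ (D ∪ N(F))` and hence in the part of its first neighbour `d_j`, which is unused.
Minimality of `D` then gives `n - |J| ≤ |J|`.
-/

section

open Set

variable {V : Type*} (G : SimpleGraph V)

theorem gamma_le_ncard {D : Set V} (hD : IsDomSet G D) : gamma G ≤ D.ncard :=
  Nat.sInf_le ⟨D, hD, rfl⟩

theorem isDomSet_diff_union {D S R : Set V} (hS : ∀ s ∈ S, ∃ u ∈ D \ S, G.Adj u s)
    (hR : ∀ v ∉ D, (∀ u ∈ D, G.Adj u v → u ∈ S) → v ∈ R ∨ ∃ r ∈ R, G.Adj r v) :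
    IsDomSet G ((D \ S) ∪ R) := by
  intro v
  by_cases hvD : v ∈ D
  · by_cases hvS : v ∈ S
    · obtain ⟨u, hu, huv⟩ := hS v hvS
      exact .inr ⟨u, .inl hu, huv⟩
    · exact .inl (.inl ⟨hvD, hvS⟩)
  by_cases hDS : ∃ u ∈ D \ S, G.Adj u v
  · obtain ⟨u, hu, huv⟩ := hDS
    exact .inr ⟨u, .inl hu, huv⟩
  push Not at hDS
  have hNS : ∀ u ∈ D, G.Adj u v → u ∈ S := fun u hu huv =>
    by_contra fun huS => hDS u ⟨hu, huS⟩ huv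
  rcases hR v hvD hNS with hvR | ⟨r, hr, hrv⟩
  · exact .inl (.inr hvR)
  · exact .inr ⟨r, .inr hr, hrv⟩

def IsStandardPartition {n : ℕ} (Y : Set V) (d : Fin n → V) (P : Fin n → Set V) : Prop :=
  ∀ i, P i = {w | w ∈ Y ∧ G.Adj (d i) w} \ ⋃ j < i, P j

theorem IsStandardPartition.exists_adj_mem {n : ℕ} {Y : Set V} {d : Fin n → V}
    {P : Fin n → Set V} (hP : IsStandardPartition G Y d P) {v : V} {i : Fin n} (hv : v ∈ Y)
    (hiv : G.Adj (d i) v) : ∃ j, G.Adj (d j) v ∧ v ∈ P j := by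
  obtain ⟨j, hjv, hmin⟩ := wellFounded_lt.has_min {k | G.Adj (d k) v} ⟨i, hiv⟩
  refine ⟨j, hjv, ?_⟩
  rw [hP j]
  refine ⟨⟨hv, hjv⟩, ?_⟩
  simp only [mem_iUnion, not_exists]
  intro k hkj hvk
  rw [hP k] at hvk
  exact hmin k hvk.1.2 hkj

variable {G} {n : ℕ} {P : Fin n → Set V}

theorem IsPartialISR.empty [Nonempty (Fin n → V)] : IsPartialISR G P ∅ :=
  ⟨pairwise_empty _, ∅, Classical.arbitrary _, injOn_empty _, by simp, by simp⟩

theorem IsPartialISR.insert {J : Set (Fin n)} {x : Fin n → V} (hR : IsIndep G (x '' J))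
    (hx : InjOn x J) (hxP : ∀ j ∈ J, x j ∈ P j) {j : Fin n} {v : V} (hj : j ∉ J)
    (hv : v ∈ P j) (hvR : v ∉ x '' J) (hRv : ∀ r ∈ x '' J, ¬ G.Adj r v) :
    IsPartialISR G P (Insert.insert v (x '' J)) := by
  have hxJ : EqOn (Function.update x j v) x J := fun k hk =>
    Function.update_of_ne (ne_of_mem_of_not_mem hk hj) _ _
  refine ⟨(pairwise_insert_of_notMem hvR).2 ⟨hR, fun r hr => ⟨fun h => hRv r hr h.symm,
    hRv r hr⟩⟩, Insert.insert j J, Function.update x j v, ?_, ?_, ?_⟩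
  · rw [injOn_insert hj, hxJ.image_eq, Function.update_self]
    exact ⟨hx.congr hxJ.symm, hvR⟩
  · rintro k (rfl | hk)
    · rwa [Function.update_self]
    · rw [hxJ hk]
      exact hxP k hk
  · rw [image_insert_eq, hxJ.image_eq, Function.update_self]

theorem IsPartialISR.exists_dominating [Finite V] [Nonempty (Fin n → V)] (G : SimpleGraph V)
    (P : Fin n → Set V) :
    ∃ (J : Set (Fin n)) (x : Fin n → V), IsIndep G (x '' J) ∧ InjOn x J ∧
      (∀ j ∈ J, x j ∈ P j) ∧ ∀ j ∉ J, ∀ v ∈ P j, v ∈ x '' J ∨ ∃ r ∈ x '' J, G.Adj r v := by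
  obtain ⟨R, ⟨hR, J, x, hx, hxP, rfl⟩, hmax⟩ :=
    (toFinite {R | IsPartialISR G P R}).exists_maximalFor ncard _ ⟨∅, .empty⟩
  refine ⟨J, x, hR, hx, hxP, fun j hj v hv => ?_⟩
  by_contra! h
  have hins := IsPartialISR.insert hR hx hxP hj hv h.1 h.2
  have := hmax hins (ncard_le_ncard (subset_insert _ _))
  rw [ncard_insert_of_notMem h.1] at this
  omega

end

theorem partial_isr_half_general {V : Type*} [Fintype V] (G : SimpleGraph V)
    (D : Set V) (hDdom : IsDomSet G D) (hDmin : D.ncard = gamma G)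
    (F : Set V) (hFD : F ⊆ D)
    (hFmax : ∀ v ∈ D, v ∉ F → ∃ u ∈ F, G.Adj u v)
    {n : ℕ} (d : Fin n → V) (hd_inj : Function.Injective d)
    (hd_range : Set.range d = D \ F)
    (Vpart : Fin n → Set V)
    (hVpart : ∀ i : Fin n, Vpart i =
      {w | w ∈ Set.univ \ (D ∪ {x | ∃ u ∈ F, G.Adj u x}) ∧ G.Adj (d i) w}
        \ ⋃ j < i, Vpart j) :
    ∃ R : Set V, IsPartialISR G Vpart R ∧ n ≤ 2 * R.ncard := by
  have : Nonempty (Fin n → V) := ⟨d⟩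
  obtain ⟨J, x, hR, hx, hxP, hdom⟩ := IsPartialISR.exists_dominating G Vpart
  have hSD : d '' Jᶜ ⊆ D \ F := hd_range ▸ Set.image_subset_range _ _
  have hD' : IsDomSet G ((D \ d '' Jᶜ) ∪ x '' J) := by
    refine isDomSet_diff_union G (fun s hs => ?_) fun v hvD hvS => ?_
    · obtain ⟨u, hu, hus⟩ := hFmax s (hSD hs).1 (hSD hs).2
      exact ⟨u, ⟨hFD hu, fun h => (hSD h).2 hu⟩, hus⟩
    obtain ⟨u, hu, huv⟩ := (hDdom v).resolve_left hvD
    obtain ⟨i, -, rfl⟩ := hvS u hu huv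
    have hvY : v ∈ Set.univ \ (D ∪ {x | ∃ u ∈ F, G.Adj u x}) :=
      ⟨trivial, by rintro (h | ⟨w, hw, hwv⟩); exacts [hvD h, (hSD (hvS w (hFD hw) hwv)).2 hw]⟩
    obtain ⟨j, hjv, hvj⟩ := IsStandardPartition.exists_adj_mem G hVpart hvY huv
    obtain ⟨k, hk, hkj⟩ := hvS (d j) (hd_range.symm ▸ Set.mem_range_self j).1 hjv
    exact hdom j (hd_inj hkj ▸ hk) v hvj
  have hSJ : (d '' Jᶜ).ncard + J.ncard = n := by
    rw [Set.ncard_image_of_injective _ hd_inj, add_comm, Set.ncard_add_ncard_compl,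
      Nat.card_eq_fintype_card, Fintype.card_fin]
  have hDS : (D \ d '' Jᶜ).ncard + (d '' Jᶜ).ncard = D.ncard :=
    Set.ncard_sdiff_add_ncard_of_subset fun _ h => (hSD h).1
  have hRJ : (x '' J).ncard = J.ncard := hx.ncard_image
  have hγ : gamma G ≤ (D \ d '' Jᶜ).ncard + (x '' J).ncard :=
    (gamma_le_ncard G hD').trans (Set.ncard_union_le _ _)
  exact ⟨x '' J, ⟨hR, J, x, hx, hxP, rfl⟩, by omega⟩

theorem partial_isr_half {V : Type*} [Fintype V] (G : SimpleGraph V)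
    (D : Set V) (hDdom : IsDomSet G D) (hDmin : D.ncard = gamma G)
    (F : Set V) (hFD : F ⊆ D) (hFind : IsIndep G F)
    (hFmax : ∀ v ∈ D, v ∉ F → ∃ u ∈ F, G.Adj u v)
    {n : ℕ} (d : Fin n → V) (hd_inj : Function.Injective d)
    (hd_range : Set.range d = D \ F)
    (Vpart : Fin n → Set V)
    (hVpart : ∀ i : Fin n, Vpart i =
      {w | w ∈ Set.univ \ (D ∪ {x | ∃ u ∈ F, G.Adj u x}) ∧ G.Adj (d i) w}
        \ ⋃ j < i, Vpart j) :
    ∃ R : Set V, IsPartialISR G Vpart R ∧ n ≤ 2 * R.ncard :=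
  partial_isr_half_general G D hDdom hDmin F hFD hFmax d hd_inj hd_range Vpart hVpart
end

section
/- Let G be a finite simple graph without isolated vertices, let D be an optimal dominating set in G, and let v ∈ D be a vertex that is not isolated in the induced subgraph G[D]. Then the subgraph of G induced by the set of private neighbors of v (with respect to D) has domination number strictly greater than 1; that is, no single private neighbor of v is adjacent to or equal to every other private neighbor of v. -/
theorem private_neighbors_domination_gt_one {V : Type*} [Fintype V] (G : SimpleGraph V)
    (hiso : ∀ v : V, ∃ u, G.Adj v u)
    (D : Set V) (hopt : IsOptimalDomSet G D)
    (v : V) (hv : v ∈ D) (hviso : ∃ u ∈ D, G.Adj v u) :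
    1 < gamma (G.induce {w : V | IsPrivateNbr G D v w}) := by
  classical
  by_contra hle
  push_neg at hle
  set P : Set V := {w : V | IsPrivateNbr G D v w} with hPdef
  obtain ⟨hdom, hcard, hmaxα, hminE⟩ := hopt
  obtain ⟨u, huD, hvu⟩ := hviso
  have huv : u ≠ v := fun h => G.irrefl (h ▸ hvu)
  have hne : {n | ∃ S : Set ↥P, IsDomSet (G.induce P) S ∧ S.ncard = n}.Nonempty :=
    ⟨(Set.univ : Set ↥P).ncard, Set.univ, fun x => Or.inl (Set.mem_univ x), rfl⟩
  have hmem : sInf {n | ∃ S : Set ↥P, IsDomSet (G.induce P) S ∧ S.ncard = n} ∈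
      {n | ∃ S : Set ↥P, IsDomSet (G.induce P) S ∧ S.ncard = n} := Nat.sInf_mem hne
  obtain ⟨S, hS, hScard⟩ := hmem
  have hle1 : S.ncard ≤ 1 := by rw [hScard]; exact hle
  have hgamma_le : ∀ T : Set V, IsDomSet G T → gamma G ≤ T.ncard := fun T hT =>
    Nat.sInf_le ⟨T, hT, rfl⟩
  rcases Nat.le_one_iff_eq_zero_or_eq_one.mp hle1 with h0 | h1
  · -- S empty, so P empty; then D \ {v} dominates, contradicting minimality
    have hSempty : S = ∅ := (Set.ncard_eq_zero (Set.toFinite S)).mp h0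
    have hPempty : ∀ x : V, x ∉ P := by
      intro x hx
      rcases hS ⟨x, hx⟩ with h | ⟨u', hu', _⟩
      · rw [hSempty] at h; exact h
      · rw [hSempty] at hu'; exact hu'
    have hD0 : IsDomSet G (D \ {v}) := by
      intro x
      by_cases hxd : x ∈ D \ ({v} : Set V)
      · exact Or.inl hxd
      by_cases hxv : x = v
      · exact Or.inr ⟨u, ⟨huD, huv⟩, hxv ▸ hvu.symm⟩
      have hxD : x ∉ D := fun h => hxd ⟨h, hxv⟩
      obtain ⟨d, hd, hdx⟩ := (hdom x).resolve_left hxD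
      by_cases hdv : d = v
      · subst hdv
        by_cases hex : ∃ u' ∈ D, G.Adj u' x ∧ u' ≠ d
        · obtain ⟨u', hu', hadj, hne'⟩ := hex
          exact Or.inr ⟨u', ⟨hu', hne'⟩, hadj⟩
        · exact absurd (show x ∈ P from ⟨hxD, hdx, fun u' hu' hadj =>
            by_contra fun hne' => hex ⟨u', hu', hadj, hne'⟩⟩) (hPempty x)
      · exact Or.inr ⟨d, ⟨hd, hdv⟩, hdx⟩
    have h1 : gamma G ≤ (D \ {v}).ncard := hgamma_le _ hD0
    have h2 : (D \ {v}).ncard + 1 = D.ncard :=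
      Set.ncard_diff_singleton_add_one hv (Set.toFinite D)
    omega
  · -- S = {w₀} : the single private neighbor w dominates all of P; swap v ↔ w
    obtain ⟨w₀, hSw⟩ := Set.ncard_eq_one.mp h1
    have hwP : IsPrivateNbr G D v (w₀ : V) := w₀.2
    set w : V := (w₀ : V) with hwdef
    have hwD : w ∉ D := hwP.1
    have hvw : G.Adj v w := hwP.2.1
    have hwpriv : ∀ u' ∈ D, G.Adj u' w → u' = v := hwP.2.2
    have hwv : w ≠ v := fun h => hwD (h ▸ hv)
    have hdomw : ∀ x : V, x ∈ P → x = w ∨ G.Adj w x := by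
      intro x hx
      rcases hS ⟨x, hx⟩ with h | ⟨u', hu', hadj⟩
      · rw [hSw] at h
        have h' : (⟨x, hx⟩ : ↥P) = w₀ := h
        exact Or.inl (congrArg Subtype.val h')
      · rw [hSw] at hu'
        have h' : u' = w₀ := hu'
        subst h'
        exact Or.inr hadj
    set D' : Set V := insert w (D \ {v}) with hD'def
    have hD' : IsDomSet G D' := by
      intro x
      by_cases hxd : x ∈ D'
      · exact Or.inl hxd
      by_cases hxv : x = v
      · exact Or.inr ⟨u, Set.mem_insert_iff.mpr (Or.inr ⟨huD, huv⟩), hxv ▸ hvu.symm⟩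
      have hxD : x ∉ D := fun h => hxd (Set.mem_insert_iff.mpr (Or.inr ⟨h, hxv⟩))
      obtain ⟨d, hd, hdx⟩ := (hdom x).resolve_left hxD
      by_cases hdv : d = v
      · subst hdv
        by_cases hex : ∃ u' ∈ D, G.Adj u' x ∧ u' ≠ d
        · obtain ⟨u', hu', hadj, hne'⟩ := hex
          exact Or.inr ⟨u', Set.mem_insert_iff.mpr (Or.inr ⟨hu', hne'⟩), hadj⟩
        · have hxP : x ∈ P := ⟨hxD, hdx, fun u' hu' hadj =>
            by_contra fun hne' => hex ⟨u', hu', hadj, hne'⟩⟩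
          rcases hdomw x hxP with rfl | hadj
          · exact absurd (Set.mem_insert _ _) hxd
          · exact Or.inr ⟨w, Set.mem_insert _ _, hadj⟩
      · exact Or.inr ⟨d, Set.mem_insert_iff.mpr (Or.inr ⟨hd, hdv⟩), hdx⟩
    have hwD0 : w ∉ D \ ({v} : Set V) := fun h => hwD h.1
    have hD'card : D'.ncard = gamma G := by
      rw [hD'def, Set.ncard_insert_of_notMem hwD0 (Set.toFinite _),
        Set.ncard_diff_singleton_add_one hv (Set.toFinite D), hcard]
    -- independence numbers agree
    have hbdd : ∀ T : Set V,
        BddAbove {n | ∃ S' : Set V, S' ⊆ T ∧ IsIndep G S' ∧ S'.ncard = n} := by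
      intro T
      refine ⟨Fintype.card V, fun n hn => ?_⟩
      obtain ⟨S', _, _, hcS⟩ := hn
      rw [← hcS]
      calc S'.ncard ≤ (Set.univ : Set V).ncard :=
            Set.ncard_le_ncard (Set.subset_univ _) (Set.toFinite _)
        _ = Fintype.card V := by rw [Set.ncard_univ, Nat.card_eq_fintype_card]
    have hαmem : alphaOn G D ∈ {n | ∃ S' : Set V, S' ⊆ D ∧ IsIndep G S' ∧ S'.ncard = n} :=
      Nat.sSup_mem ⟨0, ∅, Set.empty_subset _, Set.pairwise_empty _, Set.ncard_empty _⟩ (hbdd D)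
    obtain ⟨A, hAD, hAind, hAcard⟩ := hαmem
    have hkey : ∃ A' : Set V, A' ⊆ D' ∧ IsIndep G A' ∧ A'.ncard = A.ncard := by
      by_cases hvA : v ∈ A
      · refine ⟨insert w (A \ {v}), ?_, ?_, ?_⟩
        · intro a ha
          rcases Set.mem_insert_iff.mp ha with rfl | ⟨haA, hav⟩
          · exact Set.mem_insert _ _
          · exact Set.mem_insert_iff.mpr (Or.inr ⟨hAD haA, hav⟩)
        · intro a ha b hb hab
          have haux : ∀ c ∈ A \ ({v} : Set V), ¬ G.Adj w c := by
            intro c hc hadj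
            exact hc.2 (hwpriv c (hAD hc.1) hadj.symm)
          rcases Set.mem_insert_iff.mp ha with rfl | ha
          · rcases Set.mem_insert_iff.mp hb with rfl | hb
            · exact absurd rfl hab
            · exact haux _ hb
          · rcases Set.mem_insert_iff.mp hb with rfl | hb
            · exact fun hadj => haux _ ha hadj.symm
            · exact hAind ha.1 hb.1 hab
        · have hwA : w ∉ A \ ({v} : Set V) := fun h => hwD (hAD h.1)
          rw [Set.ncard_insert_of_notMem hwA (Set.toFinite _),
            Set.ncard_diff_singleton_add_one hvA (Set.toFinite A)]
      · exact ⟨A, fun a ha => Set.mem_insert_iff.mpr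
          (Or.inr ⟨hAD ha, fun h => hvA (h ▸ ha)⟩), hAind, rfl⟩
    obtain ⟨A', hA'D, hA'ind, hA'card⟩ := hkey
    have hαge : alphaOn G D ≤ alphaOn G D' := by
      rw [← hAcard, ← hA'card]
      exact le_csSup (hbdd D') ⟨A', hA'D, hA'ind, rfl⟩
    have hαeq : alphaOn G D' = alphaOn G D :=
      le_antisymm (hmaxα D' hD' hD'card) hαge
    -- edge counts: G[D'] has strictly fewer edges than G[D]
    have hsub : {e ∈ G.edgeSet | ∀ x ∈ e, x ∈ D'} ⊆ {e ∈ G.edgeSet | ∀ x ∈ e, x ∈ D} := by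
      intro e
      induction e using Sym2.ind with
      | _ a b =>
        intro he
        obtain ⟨hab, hmemD'⟩ := he
        have hadj : G.Adj a b := hab
        have haD' : a ∈ D' := hmemD' a (Sym2.mem_mk_left a b)
        have hbD' : b ∈ D' := hmemD' b (Sym2.mem_mk_right a b)
        have key : ∀ c d : V, G.Adj c d → c ∈ D' → d ∈ D' → c ∈ D := by
          intro c d hcd hc hd
          rcases Set.mem_insert_iff.mp hc with rfl | hc
          · rcases Set.mem_insert_iff.mp hd with rfl | hd
            · exact (G.irrefl hcd).elim
            · exact absurd (hwpriv d hd.1 hcd.symm) hd.2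
          · exact hc.1
        refine ⟨hab, ?_⟩
        intro x hx
        rcases Sym2.mem_iff.mp hx with rfl | rfl
        · exact key x b hadj haD' hbD'
        · exact key x a hadj.symm hbD' haD'
    have hedge_in : s(v, u) ∈ {e ∈ G.edgeSet | ∀ x ∈ e, x ∈ D} := by
      refine ⟨hvu, ?_⟩
      intro x hx
      rcases Sym2.mem_iff.mp hx with rfl | rfl
      · exact hv
      · exact huD
    have hedge_out : s(v, u) ∉ {e ∈ G.edgeSet | ∀ x ∈ e, x ∈ D'} := by
      intro h
      have hvD' : v ∈ D' := h.2 v (Sym2.mem_mk_left v u)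
      rcases Set.mem_insert_iff.mp hvD' with h' | h'
      · exact hwv h'.symm
      · exact h'.2 rfl
    have hss : {e ∈ G.edgeSet | ∀ x ∈ e, x ∈ D'} ⊂ {e ∈ G.edgeSet | ∀ x ∈ e, x ∈ D} :=
      (Set.ssubset_iff_of_subset hsub).mpr ⟨_, hedge_in, hedge_out⟩
    have hlt : edgeCountOn G D' < edgeCountOn G D :=
      Set.ncard_lt_ncard hss (Set.toFinite _)
    exact absurd (hminE D' hD' hD'card hαeq) (not_le.mpr hlt)
end

section
/- Let G be a finite simple graph without isolated vertices, let D be an optimal dominating set in G, and let a be the number of isolated vertices of the induced subgraph G[D]. Then either G has an independent set S such that every vertex of D ∖ S has a neighbor in S ∖ D, or all of the following hold: (1) a + 1 ≤ α(G[D]) ≤ |D| − 3; (2) |V(G)| + a ≥ 3|D|; (3) |D| ≥ a + 5. -/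
/-!
Let `A` be the set of isolated vertices of `G[D]` and assume no independent set `S` dominates
`D \ S` from `V \ D`. Every vertex of `D \ A` then has a private neighbour, and in fact two:
otherwise swapping it for its private neighbour keeps `|D|` and `α(G[D])` but loses an edge.
Extending a maximum independent set `I ⊇ A` of `G[D]` by private neighbours of the vertices
of `D \ I` produces such an `S` as soon as `|D \ I| ≤ 2`; when `|D \ I| = 2` the required
non-adjacent pair of private neighbours exists, since otherwise a swap enlarges `α(G[D])`.
Hence `α(G[D]) ≤ |D| - 3`.

The outside neighbours of `A` form, together with `D \ A`, a dominating set (`G` has no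
isolated vertices), so there are at least `a` of them; with the at least `2 |D \ A|` private
neighbours this gives `|V| ≥ |D| + a + 2 (|D| - a)`.

Finally, if `|D| = a + 4` then `α(G[D]) = a + 1`, so `G[D]` is a `K₄` on `{c, d, e, f}` plus
`a` isolated vertices. Replacing `c, d` by non-adjacent private neighbours of `e, f` yields a
dominating set of the same size and independence number with fewer edges, contradicting
optimality.
-/

open Set

section

variable {V : Type*} {G : SimpleGraph V}

def isolatedIn (G : SimpleGraph V) (D : Set V) : Set V :=
  {v ∈ D | ∀ u ∈ D, ¬ G.Adj v u}

def IsIndepOutsideDom (G : SimpleGraph V) (D S : Set V) : Prop :=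
  IsIndep G S ∧ ∀ v ∈ D \ S, ∃ u ∈ S \ D, G.Adj u v

theorem isolatedIn_subset (D : Set V) : isolatedIn G D ⊆ D := fun _ hv => hv.1

structure IsMaxIndepIn (G : SimpleGraph V) (D I : Set V) : Prop where
  subset : I ⊆ D
  isIndep : IsIndep G I
  ncard_eq : I.ncard = alphaOn G D

theorem IsIndep.mono {S T : Set V} (hT : IsIndep G T) (hST : S ⊆ T) : IsIndep G S :=
  Set.Pairwise.mono hST hT

theorem IsIndep.union {S T : Set V} (hS : IsIndep G S) (hT : IsIndep G T)
    (h : ∀ x ∈ S, ∀ y ∈ T, ¬ G.Adj x y) : IsIndep G (S ∪ T) :=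
  pairwise_union.2 ⟨hS, hT, fun x hx y hy _ => ⟨h x hx y hy, fun h' => h x hx y hy h'.symm⟩⟩

theorem IsIndep.insert {S : Set V} {x : V} (hS : IsIndep G S) (h : ∀ y ∈ S, ¬ G.Adj x y) :
    IsIndep G (insert x S) :=
  Set.Pairwise.insert hS fun y hy _ => ⟨h y hy, fun h' => h y hy h'.symm⟩

theorem isIndep_singleton (x : V) : IsIndep G {x} := pairwise_singleton _ _

theorem isIndep_pair {x y : V} (h : ¬ G.Adj x y) : IsIndep G {x, y} :=
  (isIndep_singleton y).insert (by simpa using h)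

section Isolated

variable {D : Set V}

theorem exists_adj_of_mem_sdiff_isolatedIn {v : V} (hv : v ∈ D \ isolatedIn G D) :
    ∃ u ∈ D, G.Adj v u := by
  by_contra! h
  exact hv.2 ⟨hv.1, h⟩

theorem IsIndep.union_isolatedIn {T : Set V} (hT : IsIndep G T) (hTD : T ⊆ D) :
    IsIndep G (T ∪ isolatedIn G D) :=
  hT.union (fun _ hu w hw _ => hu.2 w (isolatedIn_subset D hw))
    fun x hx _ hy hxy => hy.2 x (hTD hx) hxy.symm

theorem isIndep_insert_isolatedIn {v : V} (hv : v ∈ D) :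
    IsIndep G (insert v (isolatedIn G D)) := by
  simpa only [singleton_union] using
    (isIndep_singleton v).union_isolatedIn (singleton_subset_iff.2 hv)

end Isolated

section PrivateNeighbors

variable {D : Set V} {v p : V}

theorem IsPrivateNbr.not_adj {u : V} (hp : IsPrivateNbr G D v p) (hu : u ∈ D) (huv : u ≠ v) :
    ¬ G.Adj u p :=
  fun h => huv (hp.2.2 u hu h)

theorem IsPrivateNbr.eq {w : V} (hv : IsPrivateNbr G D v p) (hw : IsPrivateNbr G D w p)
    (hwD : w ∈ D) : w = v :=
  hv.2.2 w hwD hw.2.1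

theorem IsDomSet.isPrivateNbr (hD : IsDomSet G D) {y : V} (hy : y ∉ D)
    (h : ∀ u ∈ D, G.Adj u y → u = v) : IsPrivateNbr G D v y := by
  obtain ⟨u, hu, hadj⟩ := (hD y).resolve_left hy
  exact ⟨hy, h u hu hadj ▸ hadj, h⟩

theorem isDomSet_sdiff_union {R P : Set V} (hR : ∀ r ∈ R, ∃ u ∈ (D \ R) ∪ P, G.Adj u r)
    (hP : ∀ y ∉ D, (∀ u ∈ D, G.Adj u y → u ∈ R) → y ∈ P ∨ ∃ p ∈ P, G.Adj p y) :
    IsDomSet G ((D \ R) ∪ P) := by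
  intro y
  by_cases hyR : y ∈ R
  · exact Or.inr (hR y hyR)
  by_cases hyD : y ∈ D
  · exact Or.inl (Or.inl ⟨hyD, hyR⟩)
  by_cases hout : ∃ u ∈ D, G.Adj u y ∧ u ∉ R
  · obtain ⟨u, hu, hadj, huR⟩ := hout
    exact Or.inr ⟨u, Or.inl ⟨hu, huR⟩, hadj⟩
  push Not at hout
  rcases hP y hyD fun u hu hadj => hout u hu hadj with hyP | ⟨p, hp, hadj⟩
  · exact Or.inl (Or.inr hyP)
  · exact Or.inr ⟨p, Or.inr hp, hadj⟩

theorem IsDomSet.exchange (hD : IsDomSet G D) {x : V}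
    (hv : ∃ u ∈ insert x (D \ {v}), G.Adj u v)
    (hx : ∀ t, IsPrivateNbr G D v t → t = x ∨ G.Adj x t) :
    IsDomSet G (insert x (D \ {v})) := by
  rw [← union_singleton]
  refine isDomSet_sdiff_union (by simpa [union_singleton] using hv) fun y hy hyv => ?_
  simpa [eq_comm] using hx y (hD.isPrivateNbr hy fun u hu hadj => hyv u hu hadj)

theorem isIndepOutsideDom_union {T P : Set V} (hi : IsIndep G (T ∪ P))
    (hPD : ∀ p ∈ P, p ∉ D) (hcov : ∀ v ∈ D \ T, ∃ p ∈ P, G.Adj p v) :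
    IsIndepOutsideDom G D (T ∪ P) := by
  refine ⟨hi, fun v hv => ?_⟩
  obtain ⟨p, hp, hadj⟩ := hcov v ⟨hv.1, fun h => hv.2 (Or.inl h)⟩
  exact ⟨p, ⟨Or.inr hp, hPD p hp⟩, hadj⟩

theorem isIndepOutsideDom_union_of_isPrivateNbr {T P : Set V} (hTD : T ⊆ D)
    (hT : IsIndep G T) (hP : IsIndep G P)
    (hPT : ∀ p ∈ P, ∃ v ∈ D \ T, IsPrivateNbr G D v p)
    (hTP : ∀ v ∈ D \ T, ∃ p ∈ P, IsPrivateNbr G D v p) : IsIndepOutsideDom G D (T ∪ P) := by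
  refine isIndepOutsideDom_union (hT.union hP fun t ht p hp => ?_) (fun p hp => ?_)
    fun v hv => ?_
  · obtain ⟨w, hw, hwp⟩ := hPT p hp
    exact hwp.not_adj (hTD ht) fun h => hw.2 (h ▸ ht)
  · obtain ⟨w, -, hwp⟩ := hPT p hp
    exact hwp.1
  · obtain ⟨p, hp, hvp⟩ := hTP v hv
    exact ⟨p, hp, hvp.2.1.symm⟩

end PrivateNeighbors

section Counting

variable [Finite V] {D : Set V}

theorem bddAbove_alphaOn_set (D : Set V) :
    BddAbove {n | ∃ S : Set V, S ⊆ D ∧ IsIndep G S ∧ S.ncard = n} :=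
  ⟨D.ncard, by rintro n ⟨S, hSD, -, rfl⟩; exact ncard_le_ncard hSD⟩

theorem le_alphaOn {S : Set V} (hSD : S ⊆ D) (hS : IsIndep G S) : S.ncard ≤ alphaOn G D :=
  le_csSup (bddAbove_alphaOn_set D) ⟨S, hSD, hS, rfl⟩

theorem exists_isMaxIndepIn (G : SimpleGraph V) (D : Set V) : ∃ I, IsMaxIndepIn G D I := by
  obtain ⟨I, hID, hI, hIc⟩ :=
    Nat.sSup_mem (s := {n | ∃ S : Set V, S ⊆ D ∧ IsIndep G S ∧ S.ncard = n})
      ⟨0, ∅, empty_subset D, pairwise_empty _, ncard_empty V⟩ (bddAbove_alphaOn_set D)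
  exact ⟨I, ⟨hID, hI, hIc⟩⟩

theorem exists_isMaxIndepIn_superset_isolatedIn (G : SimpleGraph V) (D : Set V) :
    ∃ I, IsMaxIndepIn G D I ∧ isolatedIn G D ⊆ I := by
  obtain ⟨I, hID, hI, hIc⟩ := exists_isMaxIndepIn G D
  have hJD : I ∪ isolatedIn G D ⊆ D := union_subset hID (isolatedIn_subset D)
  have hJ := hI.union_isolatedIn hID
  refine ⟨_, ⟨hJD, hJ, le_antisymm (le_alphaOn hJD hJ) ?_⟩, subset_union_right⟩
  exact hIc ▸ ncard_le_ncard subset_union_left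

theorem alphaOn_le_alphaOn_exchange {v p : V} (hp : IsPrivateNbr G D v p) :
    alphaOn G D ≤ alphaOn G (insert p (D \ {v})) := by
  obtain ⟨I, hID, hI, hIc⟩ := exists_isMaxIndepIn G D
  rw [← hIc]
  by_cases hvI : v ∈ I
  · have hJ : IsIndep G (insert p (I \ {v})) :=
      (hI.mono sdiff_subset).insert fun y hy hadj => hp.not_adj (hID hy.1) hy.2 hadj.symm
    calc I.ncard = (insert p (I \ {v})).ncard :=
          (ncard_exchange (fun h => hp.1 (hID h)) hvI).symm
      _ ≤ _ := le_alphaOn (insert_subset_insert (sdiff_subset_sdiff_left hID)) hJ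
  · exact le_alphaOn (fun y hy => mem_insert_of_mem _ ⟨hID hy, fun h : y = v => hvI (h ▸ hy)⟩) hI

theorem ncard_isolatedIn_lt_alphaOn (hL : ¬ ∃ S, IsIndepOutsideDom G D S) :
    (isolatedIn G D).ncard < alphaOn G D := by
  obtain ⟨v, hvD, hvA⟩ : ∃ v ∈ D, v ∉ isolatedIn G D := by
    by_contra! h
    exact hL ⟨D, fun x hx y hy _ => (h x hx).2 y hy, fun v hv => absurd hv.1 hv.2⟩
  calc (isolatedIn G D).ncard < (insert v (isolatedIn G D)).ncard :=
        ncard_lt_ncard (ssubset_insert hvA)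
    _ ≤ alphaOn G D :=
        le_alphaOn (insert_subset hvD (isolatedIn_subset D)) (isIndep_insert_isolatedIn hvD)

theorem adj_of_alphaOn_le (hα : alphaOn G D ≤ (isolatedIn G D).ncard + 1) {x y : V}
    (hx : x ∈ D \ isolatedIn G D) (hy : y ∈ D \ isolatedIn G D) (hxy : x ≠ y) : G.Adj x y := by
  by_contra hadj
  have hsub : {x, y} ⊆ D := pair_subset hx.1 hy.1
  have hdisj : Disjoint {x, y} (isolatedIn G D) := by
    rw [disjoint_left]
    rintro _ (rfl | rfl)
    exacts [hx.2, hy.2]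
  have := le_alphaOn (union_subset hsub (isolatedIn_subset D))
    ((isIndep_pair hadj).union_isolatedIn hsub)
  rw [ncard_union_eq hdisj, ncard_pair hxy] at this
  omega

theorem isMaxIndepIn_insert_isolatedIn (hα : alphaOn G D ≤ (isolatedIn G D).ncard + 1) {v : V}
    (hv : v ∈ D \ isolatedIn G D) : IsMaxIndepIn G D (insert v (isolatedIn G D)) := by
  have hsub : insert v (isolatedIn G D) ⊆ D := insert_subset hv.1 (isolatedIn_subset D)
  have hi := isIndep_insert_isolatedIn (G := G) hv.1
  refine ⟨hsub, hi, le_antisymm (le_alphaOn hsub hi) ?_⟩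
  rwa [ncard_insert_of_notMem hv.2]

theorem edgeCountOn_insert {S : Set V} {x : V} (hx : x ∉ S) :
    edgeCountOn G (insert x S) = edgeCountOn G S + (G.neighborSet x ∩ S).ncard := by
  have hsplit : {e ∈ G.edgeSet | ∀ v ∈ e, v ∈ insert x S} =
      {e ∈ G.edgeSet | ∀ v ∈ e, v ∈ S} ∪ (fun y => s(x, y)) '' (G.neighborSet x ∩ S) := by
    ext e
    induction e using Sym2.ind with
    | _ u w =>
      simp only [mem_ofPred_eq, SimpleGraph.mem_edgeSet, Sym2.mem_iff, forall_eq_or_imp,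
        forall_eq, mem_insert_iff, mem_union, mem_image, mem_inter_iff,
        SimpleGraph.mem_neighborSet, Sym2.eq_iff]
      grind [G.adj_symm, G.ne_of_adj]
  have hdisj : Disjoint {e ∈ G.edgeSet | ∀ v ∈ e, v ∈ S}
      ((fun y => s(x, y)) '' (G.neighborSet x ∩ S)) := by
    rw [disjoint_left]
    rintro _ ⟨-, he⟩ ⟨y, -, rfl⟩
    exact hx (he x (Sym2.mem_mk_left x y))
  rw [edgeCountOn, hsplit, ncard_union_eq hdisj,
    ncard_image_of_injective _ fun _ _ => Sym2.congr_right.1]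
  rfl

theorem edgeCountOn_insert_le (S : Set V) (x : V) :
    edgeCountOn G (insert x S) ≤ edgeCountOn G S + (G.neighborSet x ∩ S).ncard := by
  by_cases hx : x ∈ S
  · rw [insert_eq_of_mem hx]
    omega
  · exact (edgeCountOn_insert hx).le

theorem edgeCountOn_exchange_lt {v x : V} (hv : v ∈ D) (hx : x ∉ D)
    (h : (G.neighborSet x ∩ (D \ {v})).ncard < (G.neighborSet v ∩ (D \ {v})).ncard) :
    edgeCountOn G (insert x (D \ {v})) < edgeCountOn G D := by
  have hx' := edgeCountOn_insert (G := G) fun h : x ∈ D \ {v} => hx h.1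
  have hv' := edgeCountOn_insert (G := G) (S := D \ {v}) (x := v) fun h => h.2 rfl
  rw [insert_sdiff_singleton, insert_eq_of_mem hv] at hv'
  omega

theorem edgeCountOn_exchange_pair_lt {c d e f p q : V} (hc : c ∈ D) (hd : d ∈ D) (he : e ∈ D)
    (hcd : G.Adj c d) (hce : G.Adj c e) (hde : G.Adj d e) (hp : IsPrivateNbr G D e p)
    (hq : IsPrivateNbr G D f q) (hpq : ¬ G.Adj p q) :
    edgeCountOn G (insert p (insert q (D \ {c, d}))) < edgeCountOn G D := by
  set R := D \ {c, d}
  have heR : e ∈ R := ⟨he, by rintro (h | h); exacts [hce.ne h.symm, hde.ne h.symm]⟩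
  have hdR : d ∉ R := fun h => h.2 (mem_insert_of_mem _ rfl)
  have hcR : c ∉ insert d R := by
    rintro (h | h)
    exacts [hcd.ne h, h.2 (mem_insert _ _)]
  have hD : insert c (insert d R) = D := by
    rw [show insert c (insert d R) = {c, d} ∪ R by simp only [insert_union, singleton_union],
      union_sdiff_cancel (pair_subset hc hd)]
  have hqR : (G.neighborSet q ∩ R).ncard ≤ 1 :=
    (ncard_le_ncard (t := {f}) fun y hy => hq.2.2 y hy.2.1 (G.adj_symm hy.1)).trans
      (ncard_singleton f).le
  have hpR : (G.neighborSet p ∩ insert q R).ncard ≤ 1 := by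
    refine (ncard_le_ncard (t := {e}) fun y hy => ?_).trans (ncard_singleton e).le
    obtain ⟨hpy, hy | hy⟩ := hy
    exacts [absurd (hy ▸ hpy) hpq, hp.2.2 y hy.1 (G.adj_symm hpy)]
  have hdR' : 1 ≤ (G.neighborSet d ∩ R).ncard := (ncard_pos).2 ⟨e, hde, heR⟩
  have hcR' : 2 ≤ (G.neighborSet c ∩ insert d R).ncard := by
    rw [← ncard_pair hde.ne]
    exact ncard_le_ncard (pair_subset ⟨hcd, mem_insert _ _⟩ ⟨hce, mem_insert_of_mem _ heR⟩)
  -- the new set spans at most `e(R) + 1 + 1` edges, `D` at least `e(R) + 1 + 2`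
  have hupper := (edgeCountOn_insert_le (G := G) (insert q R) p).trans
    (Nat.add_le_add_right (edgeCountOn_insert_le R q) _)
  have hlower := edgeCountOn_insert (G := G) hcR
  rw [edgeCountOn_insert hdR, hD] at hlower
  omega

end Counting

theorem adj_or_adj_of_isPrivateNbr {D : Set V} (hL : ¬ ∃ S, IsIndepOutsideDom G D S)
    {c d e f : V} (hK : D \ isolatedIn G D = {c, d, e, f}) (hdc : d ≠ c) (hde : d ≠ e)
    (hdf : d ≠ f) {p q r : V} (hp : IsPrivateNbr G D e p) (hq : IsPrivateNbr G D f q)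
    (hpq : ¬ G.Adj p q) (hr : IsPrivateNbr G D c r) : G.Adj p r ∨ G.Adj q r := by
  by_contra! h
  have hmem : ∀ y, y ∈ D \ isolatedIn G D ↔ y = c ∨ y = d ∨ y = e ∨ y = f := fun y => by
    rw [hK]; rfl
  have hT : ∀ y, y ∈ D \ insert d (isolatedIn G D) ↔ y = c ∨ y = e ∨ y = f := fun y => by
    have := hmem y
    simp only [mem_sdiff, mem_insert_iff, not_or] at this ⊢
    grind
  have hd : d ∈ D := ((hmem d).2 (by simp)).1
  refine hL ⟨_, isIndepOutsideDom_union_of_isPrivateNbr (insert_subset hd (isolatedIn_subset D))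
    (isIndep_insert_isolatedIn hd) ((isIndep_pair h.2).insert (x := p) ?_) ?_ fun v hv => ?_⟩
  · rintro _ (rfl | rfl)
    exacts [hpq, h.1]
  · rintro _ (rfl | rfl | rfl)
    exacts [⟨e, (hT e).2 (by simp), hp⟩, ⟨f, (hT f).2 (by simp), hq⟩, ⟨c, (hT c).2 (by simp), hr⟩]
  · rcases (hT v).1 hv with rfl | rfl | rfl
    exacts [⟨r, by simp, hr⟩, ⟨p, by simp, hp⟩, ⟨q, by simp, hq⟩]

namespace IsOptimalDomSet

variable {D : Set V}

theorem ncard_le (hopt : IsOptimalDomSet G D) {D' : Set V} (hD' : IsDomSet G D') :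
    D.ncard ≤ D'.ncard :=
  hopt.2.1 ▸ Nat.sInf_le ⟨D', hD', rfl⟩

theorem not_improved (hopt : IsOptimalDomSet G D) {D' : Set V} (hD' : IsDomSet G D')
    (hcard : D'.ncard = D.ncard)
    (h : alphaOn G D < alphaOn G D' ∨
      (alphaOn G D ≤ alphaOn G D' ∧ edgeCountOn G D' < edgeCountOn G D)) : False := by
  have hγ : D'.ncard = gamma G := hcard.trans hopt.2.1
  have hα := hopt.2.2.1 D' hD' hγ
  rcases h with h | ⟨h, he⟩
  · omega
  · have := hopt.2.2.2 D' hD' hγ (le_antisymm hα h)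
    omega

theorem exists_isPrivateNbr_ne_not_adj (hopt : IsOptimalDomSet G D) {v x : V}
    (hv : v ∈ D \ isolatedIn G D) (hx : x ∉ D)
    (h : alphaOn G D < alphaOn G (insert x (D \ {v})) ∨
      (alphaOn G D ≤ alphaOn G (insert x (D \ {v})) ∧
        edgeCountOn G (insert x (D \ {v})) < edgeCountOn G D)) :
    ∃ t, IsPrivateNbr G D v t ∧ t ≠ x ∧ ¬ G.Adj x t := by
  by_contra! hno
  obtain ⟨u, hu, hvu⟩ := exists_adj_of_mem_sdiff_isolatedIn hv
  refine hopt.not_improved (hopt.1.exchange ⟨u, mem_insert_of_mem _ ⟨hu, hvu.ne.symm⟩, hvu.symm⟩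
    fun t ht => ?_) (ncard_exchange hx hv.1) h
  by_cases htx : t = x
  · exact Or.inl htx
  · exact Or.inr (hno t ht htx)

variable [Finite V]

theorem exists_isPrivateNbr (hopt : IsOptimalDomSet G D) {v : V}
    (hv : v ∈ D \ isolatedIn G D) : ∃ p, IsPrivateNbr G D v p := by
  obtain ⟨u, hu, hvu⟩ := exists_adj_of_mem_sdiff_isolatedIn hv
  have hnot : ¬ IsDomSet G (D \ {v}) := fun h =>
    (ncard_sdiff_singleton_lt_of_mem hv.1).not_ge (hopt.ncard_le h)
  simp only [IsDomSet, not_forall, not_or, not_exists, not_and] at hnot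
  obtain ⟨y, hyD', hy⟩ := hnot
  have hyv : y ≠ v := by
    rintro rfl
    exact hy u ⟨hu, hvu.ne.symm⟩ hvu.symm
  exact ⟨y, hopt.1.isPrivateNbr (fun h => hyD' ⟨h, hyv⟩) fun w hw hadj =>
    by_contra fun hwv => hy w ⟨hw, hwv⟩ hadj⟩

theorem exists_two_isPrivateNbr (hopt : IsOptimalDomSet G D) {v : V}
    (hv : v ∈ D \ isolatedIn G D) :
    ∃ p q, IsPrivateNbr G D v p ∧ IsPrivateNbr G D v q ∧ p ≠ q := by
  obtain ⟨p, hp⟩ := hopt.exists_isPrivateNbr hv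
  obtain ⟨u, hu, hvu⟩ := exists_adj_of_mem_sdiff_isolatedIn hv
  have hdeg : (G.neighborSet p ∩ (D \ {v})).ncard < (G.neighborSet v ∩ (D \ {v})).ncard := by
    rw [show G.neighborSet p ∩ (D \ {v}) = ∅ from
      eq_empty_of_forall_notMem fun y hy => hp.not_adj hy.2.1 hy.2.2 hy.1.symm, ncard_empty]
    exact (ncard_pos).2 ⟨u, hvu, hu, hvu.ne.symm⟩
  obtain ⟨q, hq, hqp, -⟩ := hopt.exists_isPrivateNbr_ne_not_adj hv hp.1
    (Or.inr ⟨alphaOn_le_alphaOn_exchange hp, edgeCountOn_exchange_lt hv.1 hp.1 hdeg⟩)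
  exact ⟨p, q, hp, hq, hqp.symm⟩

theorem ncard_isolatedIn_le_ncard_nbrs (hopt : IsOptimalDomSet G D)
    (hiso : ∀ v : V, ∃ u, G.Adj v u) :
    (isolatedIn G D).ncard ≤ {y | y ∉ D ∧ ∃ u ∈ isolatedIn G D, G.Adj u y}.ncard := by
  have hdom : IsDomSet G
      ((D \ isolatedIn G D) ∪ {y | y ∉ D ∧ ∃ u ∈ isolatedIn G D, G.Adj u y}) := by
    refine isDomSet_sdiff_union (fun r hr => ?_) fun y hy hyA => Or.inl ?_
    · obtain ⟨t, ht⟩ := hiso r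
      exact ⟨t, Or.inr ⟨fun htD => hr.2 t htD ht, r, hr, ht⟩, ht.symm⟩
    · obtain ⟨u, hu, hadj⟩ := (hopt.1 y).resolve_left hy
      exact ⟨hy, u, hyA u hu hadj, hadj⟩
  have := hopt.ncard_le hdom
  have := ncard_union_le (D \ isolatedIn G D) {y | y ∉ D ∧ ∃ u ∈ isolatedIn G D, G.Adj u y}
  have := ncard_sdiff_add_ncard_of_subset (isolatedIn_subset (G := G) D)
  omega

theorem two_mul_ncard_le_ncard_privateNbrs (hopt : IsOptimalDomSet G D) :
    2 * (D \ isolatedIn G D).ncard ≤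
      {y | ∃ v ∈ D \ isolatedIn G D, IsPrivateNbr G D v y}.ncard := by
  choose! p q hp hq hpq using fun v (hv : v ∈ D \ isolatedIn G D) =>
    hopt.exists_two_isPrivateNbr hv
  obtain ⟨f, hf, hf_ne⟩ : ∃ f : V × Bool → V,
      (∀ vb ∈ (D \ isolatedIn G D) ×ˢ (univ : Set Bool), IsPrivateNbr G D vb.1 (f vb)) ∧
        ∀ v ∈ D \ isolatedIn G D, f (v, true) ≠ f (v, false) := by
    refine ⟨fun vb => if vb.2 then p vb.1 else q vb.1, ?_, fun v hv => hpq v hv⟩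
    rintro ⟨v, _ | _⟩ ⟨hv, -⟩
    exacts [hq v hv, hp v hv]
  have hinj : InjOn f ((D \ isolatedIn G D) ×ˢ univ) := by
    rintro ⟨v, b⟩ hv ⟨w, c⟩ hw h
    obtain rfl : w = v := (hf _ hv).eq (h ▸ hf _ hw) hw.1.1
    have := hf_ne w hv.1
    cases b <;> cases c <;> simp_all
  calc 2 * (D \ isolatedIn G D).ncard = ((D \ isolatedIn G D) ×ˢ (univ : Set Bool)).ncard := by
        rw [ncard_prod, ncard_univ, Nat.card_eq_fintype_card, Fintype.card_bool, mul_comm]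
    _ ≤ _ := ncard_le_ncard_of_injOn f (fun vb hvb => by exact ⟨vb.1, hvb.1, hf vb hvb⟩) hinj

theorem exists_isPrivateNbr_not_adj (hopt : IsOptimalDomSet G D) {I : Set V}
    (hI : IsMaxIndepIn G D I) (hAI : isolatedIn G D ⊆ I) {v w : V} (hv : v ∈ D \ I)
    (hw : w ∈ D \ I) : ∃ p q, IsPrivateNbr G D v p ∧ IsPrivateNbr G D w q ∧ ¬ G.Adj p q := by
  obtain ⟨q, hq⟩ := hopt.exists_isPrivateNbr ⟨hw.1, fun h => hw.2 (hAI h)⟩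
  have hJ : insert q I ⊆ insert q (D \ {v}) :=
    insert_subset_insert fun y hy => ⟨hI.subset hy, fun h : y = v => hv.2 (h ▸ hy)⟩
  have hJi : IsIndep G (insert q I) := hI.isIndep.insert fun y hy hadj =>
    hq.not_adj (hI.subset hy) (fun h => hw.2 (h ▸ hy)) hadj.symm
  have hα : alphaOn G D < alphaOn G (insert q (D \ {v})) :=
    calc alphaOn G D < (insert q I).ncard := by
          rw [ncard_insert_of_notMem fun h => hq.1 (hI.subset h), hI.ncard_eq]
          omega
      _ ≤ _ := le_alphaOn hJ hJi
  obtain ⟨p, hp, -, hqp⟩ :=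
    hopt.exists_isPrivateNbr_ne_not_adj ⟨hv.1, fun h => hv.2 (hAI h)⟩ hq.1 (Or.inl hα)
  exact ⟨p, q, hp, hq, fun h => hqp h.symm⟩

theorem three_le_ncard_sdiff (hopt : IsOptimalDomSet G D) (hL : ¬ ∃ S, IsIndepOutsideDom G D S)
    {I : Set V} (hI : IsMaxIndepIn G D I) (hAI : isolatedIn G D ⊆ I) : 3 ≤ (D \ I).ncard := by
  by_contra! h
  apply hL
  interval_cases hB : (D \ I).ncard
  · rw [ncard_eq_zero] at hB
    exact ⟨I, hI.isIndep, by simp [hB]⟩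
  · obtain ⟨v, hv⟩ := ncard_eq_one.1 hB
    have hvB : v ∈ D \ I := hv ▸ rfl
    obtain ⟨p, hp⟩ := hopt.exists_isPrivateNbr ⟨hvB.1, fun h => hvB.2 (hAI h)⟩
    refine ⟨_, isIndepOutsideDom_union_of_isPrivateNbr hI.subset hI.isIndep
      (isIndep_singleton p) ?_ ?_⟩
    · rintro _ rfl
      exact ⟨v, hvB, hp⟩
    · rintro _ hu
      rw [hv] at hu
      exact ⟨p, rfl, hu ▸ hp⟩
  · obtain ⟨v, w, -, hB⟩ := ncard_eq_two.1 hB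
    have hvB : v ∈ D \ I := hB ▸ mem_insert v {w}
    have hwB : w ∈ D \ I := hB ▸ mem_insert_of_mem v rfl
    obtain ⟨p, q, hp, hq, hpq⟩ := hopt.exists_isPrivateNbr_not_adj hI hAI hvB hwB
    refine ⟨_, isIndepOutsideDom_union_of_isPrivateNbr hI.subset hI.isIndep (isIndep_pair hpq)
      ?_ ?_⟩
    · rintro _ (rfl | rfl)
      exacts [⟨v, hvB, hp⟩, ⟨w, hwB, hq⟩]
    · intro u hu
      rw [hB] at hu
      rcases hu with rfl | rfl
      exacts [⟨p, mem_insert _ _, hp⟩, ⟨q, mem_insert_of_mem _ rfl, hq⟩]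

theorem alphaOn_add_three_le (hopt : IsOptimalDomSet G D)
    (hL : ¬ ∃ S, IsIndepOutsideDom G D S) : alphaOn G D + 3 ≤ D.ncard := by
  obtain ⟨I, hI, hAI⟩ := exists_isMaxIndepIn_superset_isolatedIn G D
  have := hopt.three_le_ncard_sdiff hL hI hAI
  have := ncard_sdiff_add_ncard_of_subset hI.subset
  rw [hI.ncard_eq] at this
  omega

/- In the remaining lemmas `G[D]` is a complete graph on `{c, d, e, f}` together with the
isolated vertices of `G[D]` (by `adj_of_alphaOn_le`); this is the case `|D| = a + 4`. -/

theorem exists_isPrivateNbr_not_adj_of_neighborSet_subset (hopt : IsOptimalDomSet G D)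
    (hα : alphaOn G D ≤ (isolatedIn G D).ncard + 1) {c d e f : V}
    (hK : D \ isolatedIn G D = {c, d, e, f}) (hcd : c ≠ d) (hce : c ≠ e) (hcf : c ≠ f)
    (hde : d ≠ e) (hdf : d ≠ f) (hef : e ≠ f) {x : V} (hx : x ∉ D)
    (hxN : G.neighborSet x ∩ D ⊆ {c, d}) :
    ∃ t, IsPrivateNbr G D e t ∧ ¬ G.Adj x t := by
  have hc : c ∈ D \ isolatedIn G D := hK ▸ by simp
  have he : e ∈ D \ isolatedIn G D := hK ▸ by simp
  have heN : {c, d, f} ⊆ G.neighborSet e ∩ (D \ {e}) := by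
    rintro y hy
    have hyK : y ∈ D \ isolatedIn G D := hK ▸ by rcases hy with rfl | rfl | rfl <;> simp
    have hye : y ≠ e := by rcases hy with rfl | rfl | rfl; exacts [hce, hde, hef.symm]
    exact ⟨adj_of_alphaOn_le hα he hyK hye.symm, hyK.1, hye⟩
  have hdeg : (G.neighborSet x ∩ (D \ {e})).ncard < (G.neighborSet e ∩ (D \ {e})).ncard :=
    calc _ ≤ ({c, d} : Set V).ncard :=
          ncard_le_ncard fun y hy => hxN ⟨hy.1, hy.2.1⟩
      _ < ({c, d, f} : Set V).ncard := by
        rw [ncard_pair hcd, ncard_eq_three.2 ⟨c, d, f, hcd, hcf, hdf, rfl⟩]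
        omega
      _ ≤ _ := ncard_le_ncard heN
  have hI := isMaxIndepIn_insert_isolatedIn hα hc
  have hα' : alphaOn G D ≤ alphaOn G (insert x (D \ {e})) := hI.ncard_eq ▸
    le_alphaOn (fun y hy => mem_insert_of_mem _ ⟨hI.subset hy, by
      rintro rfl
      rcases hy with h | h
      exacts [hce h.symm, he.2 h]⟩) hI.isIndep
  obtain ⟨t, ht, -, hxt⟩ := hopt.exists_isPrivateNbr_ne_not_adj he hx
    (Or.inr ⟨hα', edgeCountOn_exchange_lt he.1 hx hdeg⟩)
  exact ⟨t, ht, hxt⟩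

theorem neighborSet_inter_ne_pair (hopt : IsOptimalDomSet G D)
    (hL : ¬ ∃ S, IsIndepOutsideDom G D S) (hα : alphaOn G D ≤ (isolatedIn G D).ncard + 1)
    {c d e f : V} (hK : D \ isolatedIn G D = {c, d, e, f}) (hcd : c ≠ d) (hce : c ≠ e)
    (hcf : c ≠ f) (hde : d ≠ e) (hdf : d ≠ f) (hef : e ≠ f) {x : V} (hx : x ∉ D) :
    G.neighborSet x ∩ D ≠ {c, d} := by
  intro hxN
  obtain ⟨t, ht, hxt⟩ := hopt.exists_isPrivateNbr_not_adj_of_neighborSet_subset hα hK hcd hce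
    hcf hde hdf hef hx hxN.subset
  have hmem : ∀ y, y ∈ D \ isolatedIn G D ↔ y = c ∨ y = d ∨ y = e ∨ y = f := fun y => by
    rw [hK]; rfl
  have hxy : ∀ y ∈ D, G.Adj x y ↔ y = c ∨ y = d := fun y hy => by
    simpa [hy] using Set.ext_iff.1 hxN y
  have hf := (hmem f).2 (by simp)
  have hT : ∀ y ∈ insert f (isolatedIn G D), y ∈ D ∧ y ≠ c ∧ y ≠ d ∧ y ≠ e := by
    rintro y (rfl | hy)
    · exact ⟨hf.1, hcf.symm, hdf.symm, hef.symm⟩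
    · refine ⟨hy.1, ?_, ?_, ?_⟩ <;> rintro rfl <;> exact ((hmem _).2 (by simp)).2 hy
  refine hL ⟨_, isIndepOutsideDom_union (T := insert f (isolatedIn G D)) (P := {x, t}) ?_
    (by rintro _ (rfl | rfl); exacts [hx, ht.1]) fun v hv => ?_⟩
  · refine (isIndep_insert_isolatedIn hf.1).union (isIndep_pair hxt) ?_
    rintro y hy _ (rfl | rfl) hadj
    · obtain ⟨hyD, hyc, hyd, -⟩ := hT y hy
      exact ((hxy y hyD).1 hadj.symm).elim hyc hyd
    · obtain ⟨hyD, -, -, hye⟩ := hT y hy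
      exact ht.not_adj hyD hye hadj
  · have hvK := (hmem v).1 ⟨hv.1, fun h => hv.2 (mem_insert_of_mem _ h)⟩
    rcases hvK with rfl | rfl | rfl | rfl
    · exact ⟨x, mem_insert _ _, (hxy v hv.1).2 (Or.inl rfl)⟩
    · exact ⟨x, mem_insert _ _, (hxy v hv.1).2 (Or.inr rfl)⟩
    · exact ⟨t, mem_insert_of_mem _ rfl, ht.2.1.symm⟩
    · exact absurd (mem_insert _ _) hv.2

theorem isDomSet_exchange_pair (hopt : IsOptimalDomSet G D)
    (hL : ¬ ∃ S, IsIndepOutsideDom G D S) (hα : alphaOn G D ≤ (isolatedIn G D).ncard + 1)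
    {c d e f : V} (hK : D \ isolatedIn G D = {c, d, e, f}) (hcd : c ≠ d) (hce : c ≠ e)
    (hcf : c ≠ f) (hde : d ≠ e) (hdf : d ≠ f) (hef : e ≠ f) {p q : V}
    (hp : IsPrivateNbr G D e p) (hq : IsPrivateNbr G D f q) (hpq : ¬ G.Adj p q) :
    IsDomSet G (insert p (insert q (D \ {c, d}))) := by
  have hmem : ∀ y, y ∈ D \ isolatedIn G D ↔ y = c ∨ y = d ∨ y = e ∨ y = f := fun y => by
    rw [hK]; rfl
  have he := (hmem e).2 (by simp)
  have heR : e ∈ D \ {c, d} := ⟨he.1, by rintro (h | h); exacts [hce h.symm, hde h.symm]⟩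
  have hK' : D \ isolatedIn G D = {d, c, e, f} := by rw [hK, insert_comm]
  simp only [← union_singleton (a := q), ← union_insert]
  refine isDomSet_sdiff_union (fun r hr => ⟨e, Or.inl heR, ?_⟩) fun y hy hyN => Or.inr ?_
  · rcases hr with rfl | rfl
    exacts [adj_of_alphaOn_le hα he ((hmem r).2 (by simp)) hce.symm,
      adj_of_alphaOn_le hα he ((hmem r).2 (by simp)) hde.symm]
  have hcover : G.Adj p y ∨ G.Adj q y → ∃ u ∈ ({p, q} : Set V), G.Adj u y := by
    rintro (h | h)
    exacts [⟨p, mem_insert _ _, h⟩, ⟨q, mem_insert_of_mem _ rfl, h⟩]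
  obtain ⟨u, hu, huy⟩ := (hopt.1 y).resolve_left hy
  by_cases hcy : G.Adj c y <;> by_cases hdy : G.Adj d y
  · refine (hopt.neighborSet_inter_ne_pair hL hα hK hcd hce hcf hde hdf hef hy ?_).elim
    ext u
    refine ⟨fun hu => hyN u hu.2 (G.adj_symm hu.1), ?_⟩
    rintro (rfl | rfl)
    exacts [⟨hcy.symm, ((hmem u).2 (by simp)).1⟩, ⟨hdy.symm, ((hmem u).2 (by simp)).1⟩]
  · refine hcover (adj_or_adj_of_isPrivateNbr hL hK hcd.symm hde hdf hp hq hpq ?_)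
    exact hopt.1.isPrivateNbr hy fun u hu hadj =>
      Or.resolve_right (hyN u hu hadj) fun h : u = d => hdy (h ▸ hadj)
  · refine hcover (adj_or_adj_of_isPrivateNbr hL hK' hcd hce hcf hp hq hpq ?_)
    exact hopt.1.isPrivateNbr hy fun u hu hadj =>
      Or.resolve_left (hyN u hu hadj) fun h : u = c => hcy (h ▸ hadj)
  · rcases hyN u hu huy with rfl | rfl
    exacts [(hcy huy).elim, (hdy huy).elim]

theorem ncard_sdiff_isolatedIn_ne_four (hopt : IsOptimalDomSet G D)
    (hL : ¬ ∃ S, IsIndepOutsideDom G D S) (hα : alphaOn G D ≤ (isolatedIn G D).ncard + 1) :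
    (D \ isolatedIn G D).ncard ≠ 4 := by
  intro h4
  obtain ⟨c, K, hcK, hK, hK3⟩ := (ncard_eq_succ (s := D \ isolatedIn G D)).1 h4
  obtain ⟨d, e, f, hde, hdf, hef, rfl⟩ := ncard_eq_three.1 hK3
  simp only [mem_insert_iff, mem_singleton_iff, not_or] at hcK
  obtain ⟨hcd, hce, hcf⟩ := hcK
  have hmem : ∀ y, y ∈ D \ isolatedIn G D ↔ y = c ∨ y = d ∨ y = e ∨ y = f := fun y => by
    rw [← hK]; rfl
  have hc := (hmem c).2 (by simp)
  have hd := (hmem d).2 (by simp)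
  have he := (hmem e).2 (by simp)
  have hf := (hmem f).2 (by simp)
  have hI := isMaxIndepIn_insert_isolatedIn hα hc
  have hnotI : ∀ {y}, y ∈ D \ isolatedIn G D → y ≠ c → y ∈ D \ insert c (isolatedIn G D) :=
    fun hy hyc => ⟨hy.1, by rintro (h | h); exacts [hyc h, hy.2 h]⟩
  obtain ⟨p, q, hp, hq, hpq⟩ := hopt.exists_isPrivateNbr_not_adj hI (subset_insert _ _)
    (hnotI he (Ne.symm hce)) (hnotI hf (Ne.symm hcf))
  have hdom := hopt.isDomSet_exchange_pair hL hα hK.symm hcd hce hcf hde hdf hef hp hq hpq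
  have hpq' : p ≠ q := fun h => hef (hp.eq (h ▸ hq) hf.1).symm
  have hcard : (insert p (insert q (D \ {c, d}))).ncard = D.ncard := by
    have := ncard_sdiff_add_ncard_of_subset (pair_subset hc.1 hd.1)
    rw [ncard_pair hcd] at this
    rw [ncard_insert_of_notMem (by rintro (h | h); exacts [hpq' h, hp.1 h.1]),
      ncard_insert_of_notMem fun h => hq.1 h.1]
    omega
  have hsub : insert e (isolatedIn G D) ⊆ D \ {c, d} := by
    rintro y (rfl | hy)
    · exact ⟨he.1, by rintro (h | h); exacts [hce h.symm, hde h.symm]⟩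
    · exact ⟨hy.1, by rintro (rfl | rfl); exacts [hc.2 hy, hd.2 hy]⟩
  have hJ := isMaxIndepIn_insert_isolatedIn hα he
  have hα' : alphaOn G D ≤ alphaOn G (insert p (insert q (D \ {c, d}))) := hJ.ncard_eq ▸
    le_alphaOn (fun y hy => mem_insert_of_mem _ (mem_insert_of_mem _ (hsub hy))) hJ.isIndep
  have hadj := fun {y z} (hy : y ∈ D \ isolatedIn G D) (hz : z ∈ D \ isolatedIn G D) =>
    adj_of_alphaOn_le hα hy hz
  exact hopt.not_improved hdom hcard (Or.inr ⟨hα', edgeCountOn_exchange_pair_lt hc.1 hd.1 he.1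
    (hadj hc hd hcd) (hadj hc he hce) (hadj hd he hde) hp hq hpq⟩)

theorem ncard_isolatedIn_add_five_le (hopt : IsOptimalDomSet G D)
    (hL : ¬ ∃ S, IsIndepOutsideDom G D S) : (isolatedIn G D).ncard + 5 ≤ D.ncard := by
  by_contra! h
  have h1 := ncard_isolatedIn_lt_alphaOn hL
  have h3 := hopt.alphaOn_add_three_le hL
  have h4 := ncard_sdiff_add_ncard_of_subset (isolatedIn_subset (G := G) D)
  exact hopt.ncard_sdiff_isolatedIn_ne_four hL (by omega) (by omega)

end IsOptimalDomSet

theorem IsOptimalDomSet.three_mul_ncard_le [Fintype V] {D : Set V}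
    (hopt : IsOptimalDomSet G D) (hiso : ∀ v : V, ∃ u, G.Adj v u) :
    3 * D.ncard ≤ Fintype.card V + (isolatedIn G D).ncard := by
  have hN := hopt.ncard_isolatedIn_le_ncard_nbrs hiso
  have hP := hopt.two_mul_ncard_le_ncard_privateNbrs
  have hA := ncard_sdiff_add_ncard_of_subset (isolatedIn_subset (G := G) D)
  set A := isolatedIn G D
  set N := {y | y ∉ D ∧ ∃ u ∈ A, G.Adj u y}
  set P := {y | ∃ v ∈ D \ A, IsPrivateNbr G D v y}
  have hDN : Disjoint D N := disjoint_left.2 fun _ hy hy' => hy'.1 hy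
  have hDNP : Disjoint (D ∪ N) P := by
    refine disjoint_union_left.2 ⟨disjoint_left.2 fun _ hy ⟨_, _, hp⟩ => hp.1 hy,
      disjoint_left.2 fun _ ⟨_, u, hu, hadj⟩ ⟨_, hv, hp⟩ => hv.2 ?_⟩
    exact hp.2.2 u hu.1 hadj ▸ hu
  have hV : (D ∪ N ∪ P).ncard ≤ Fintype.card V := by
    simpa using ncard_le_ncard (subset_univ (D ∪ N ∪ P))
  rw [ncard_union_eq hDNP, ncard_union_eq hDN] at hV
  omega

end

theorem big_lemma {V : Type*} [Fintype V] (G : SimpleGraph V)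
    (hiso : ∀ v : V, ∃ u, G.Adj v u)
    (D : Set V) (hopt : IsOptimalDomSet G D)
    (a : ℕ) (ha : a = {v ∈ D | ∀ u ∈ D, ¬ G.Adj v u}.ncard) :
    (∃ S : Set V, IsIndep G S ∧ ∀ v ∈ D \ S, ∃ u ∈ S \ D, G.Adj u v) ∨
      ((a + 1 ≤ alphaOn G D ∧ alphaOn G D + 3 ≤ D.ncard) ∧
        3 * D.ncard ≤ Fintype.card V + a ∧
        a + 5 ≤ D.ncard) := by
  by_cases hL : ∃ S, IsIndepOutsideDom G D S
  · exact Or.inl hL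
  subst ha
  exact Or.inr ⟨⟨ncard_isolatedIn_lt_alphaOn hL, hopt.alphaOn_add_three_le hL⟩,
    hopt.three_mul_ncard_le hiso, hopt.ncard_isolatedIn_add_five_le hL⟩
end
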